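/- Let M be a finite antichain of monomials over X and ⟨M⟩ the ideal of [X] it generates. The following are equivalent: (i) π⁻¹(⟨M⟩) is a finitely generated ideal of X*; (ii) for every m in M and all letters x, y, z with z ≠ x and z ≠ y (possibly x = y) such that xy divides m, there exists w in M such that w/z divides m·x⁻¹ or w/z divides m·y⁻¹; (iii) for every m in M and every letter z such that no power z^r (r ≥ 1) lies in M, if m/z has total degree at least 2 then there exist r ≥ 1 and a letter t ≠ z with t ∈ supp(m) and z^r·t ∈ M; (iv) π⁻¹(⟨M⟩) is generated, as an ideal of X*, by the set of words u with π(u) ∈ ⟨M⟩ and ∂_x π(u) ≤ max_{v ∈ M_2} ∂_x v for every letter x, where M_2 is the set of members of M whose support has size at most 2. -/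

import Mathlib

/-!
(i) ⇒ (ii): the generators of a finite generating set have length at most some `n`. The word
`x zⁿ y w₀` with `π(x y w₀) = m` lies in `π⁻¹⟨M⟩`, so it has a generator as a factor, and such a
short factor lies inside `x zⁿ` or inside `zⁿ y w₀`.

(ii) ⇒ (iii): induction on the degree of `m/z`. The `w` provided by (ii) has `w/z` of smaller
degree; once that degree is below `2`, either `z ∤ w` (then `w ∣ m`, so `w = m` by the antichain
property), or `w` is a pure power of `z`, or `w = z^r t`.

(iii) ⇒ (iv): let `u` be a factor-minimal word of `π⁻¹⟨M⟩` in which some letter `z` occurs more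
often than the bound allows. By (iii) some `w ∈ M` with `deg(w/z) ≤ 1` divides `π(u)`, with `z`
to spare. Deleting the first or the last letter of `u` then keeps `w ∣ π(u)`, contradicting
minimality.

(iv) ⇒ (i): there are only finitely many bounded words.
-/

variable {X : Type*} [DecidableEq X]

/-- The canonical projection `π` from words to monomials (exponent vectors). -/
noncomputable def piW (w : List X) : X →₀ ℕ := Multiset.toFinsupp (↑w : Multiset X)

def wordIdeal (T : Set (List X)) : Set (List X) := {v | ∃ t ∈ T, t <:+: v}

def monIdeal (M : Set (X →₀ ℕ)) : Set (X →₀ ℕ) := {v | ∃ m ∈ M, m ≤ v}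

def FGIdeal (J : Set (List X)) : Prop := ∃ T : Set (List X), T.Finite ∧ wordIdeal T = J

def IsMonAntichain (M : Set (X →₀ ℕ)) : Prop := ∀ u ∈ M, ∀ v ∈ M, u ≤ v → u = v

open Finsupp
open scoped Finset

namespace Finsupp

variable {α : Type*}

theorem erase_le_iff {z : α} {w f : α →₀ ℕ} : erase z w ≤ f ↔ ∀ c, c ≠ z → w c ≤ f c := by
  refine ⟨fun h c hc => by simpa [erase_ne hc] using h c, fun h c => ?_⟩
  by_cases hc : c = z
  · simp [hc]
  · simpa [erase_ne hc] using h c hc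

theorem erase_le_self (z : α) (w : α →₀ ℕ) : erase z w ≤ w :=
  erase_le_iff.2 fun _ _ => le_rfl

theorem le_of_erase_le {z : α} {w f : α →₀ ℕ} (h : erase z w ≤ f) (hz : w z ≤ f z) : w ≤ f := by
  refine le_def.2 fun c => ?_
  by_cases hc : c = z
  · exact hc ▸ hz
  · exact erase_le_iff.1 h c hc

theorem erase_le_of_le_add_single {z : α} {n : ℕ} {w f : α →₀ ℕ} (h : w ≤ f + single z n) :
    erase z w ≤ f :=
  erase_le_iff.2 fun c hc => by simpa [single_apply, Ne.symm hc] using h c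

theorem le_tsub_single_of_lt {a : α} {w f : α →₀ ℕ} (hw : w ≤ f) (ha : w a < f a) :
    w ≤ f - single a 1 := by
  refine le_def.2 fun c => ?_
  by_cases hc : c = a
  · subst hc; simp; omega
  · simpa [single_apply, Ne.symm hc] using hw c

theorem card_support_le_degree (f : α →₀ ℕ) : #f.support ≤ degree f := by
  classical
  calc #f.support = #(toMultiset f).toFinset := by rw [toFinset_toMultiset]
    _ ≤ Multiset.card (toMultiset f) := Multiset.toFinset_card_le _
    _ = degree f := card_toMultiset f

theorem exists_single_add_single_le_of_two_le_degree {f : α →₀ ℕ} (h : 2 ≤ degree f) :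
    ∃ x y, single x 1 + single y 1 ≤ f := by
  obtain ⟨g, hgf, hg⟩ := exists_le_degree_eq f 2 h
  obtain ⟨g₁, hg₁g, hg₁⟩ := exists_le_degree_eq g 1 (by omega)
  obtain ⟨x, rfl⟩ := (sum_eq_one_iff g₁).1 hg₁
  obtain ⟨y, hy⟩ := (sum_eq_one_iff (g - single x 1)).1 <| by
    have := map_add degree (g - single x 1) (single x 1)
    rw [tsub_add_cancel_of_le hg₁g] at this
    simp only [degree_single] at this
    change degree _ = 1
    omega
  refine ⟨x, y, ?_⟩
  rw [← hy, add_tsub_cancel_of_le hg₁g]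
  exact hgf

theorem eq_single_of_degree_erase_eq_zero {z : α} {w : α →₀ ℕ} (h : degree (erase z w) = 0) :
    w = single z (w z) := by
  rw [degree_eq_zero_iff] at h
  rw [← single_add_erase z w, h, add_zero, single_eq_same]

theorem exists_eq_single_add_single_of_degree_erase_eq_one {z : α} {w : α →₀ ℕ}
    (h : degree (erase z w) = 1) : ∃ t, t ≠ z ∧ w = single z (w z) + single t 1 := by
  obtain ⟨t, ht⟩ := (sum_eq_one_iff (erase z w)).1 h
  have htz : t ≠ z := by
    rintro rfl
    simpa using congrArg (· t) ht
  refine ⟨t, htz, ?_⟩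
  rw [← ht, single_add_erase]

theorem card_support_le_two_of_degree_erase_le_one {z : α} {w : α →₀ ℕ}
    (h : degree (erase z w) ≤ 1) : #w.support ≤ 2 := by
  classical
  calc #w.support ≤ #(insert z (erase z w).support) := by
        refine Finset.card_le_card fun c hc => ?_
        by_cases hcz : c = z
        · simp [hcz]
        · simpa [hcz] using hc
    _ ≤ #(erase z w).support + 1 := Finset.card_insert_le _ _
    _ ≤ 2 := by linarith [card_support_le_degree (erase z w)]

end Finsupp

theorem List.exists_infix_minimal {α : Type*} {p : List α → Prop} {u : List α} (hu : p u) :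
    ∃ s, s <:+: u ∧ p s ∧ ∀ v, v <:+: s → v.length < s.length → ¬ p v := by
  induction hn : u.length using Nat.strong_induction_on generalizing u with
  | _ n ih =>
  by_cases h : ∃ v, v <:+: u ∧ v.length < u.length ∧ p v
  · obtain ⟨v, hvu, hlen, hv⟩ := h
    obtain ⟨s, hsv, hs, hmin⟩ := ih _ (hn ▸ hlen) hv rfl
    exact ⟨s, hsv.trans hvu, hs, hmin⟩
  · exact ⟨u, List.infix_refl u, hu, fun v hvu hlen hv => h ⟨v, hvu, hlen, hv⟩⟩

section Words

variable {α : Type*} [DecidableEq α]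

theorem piW_apply (u : List α) (x : α) : piW u x = u.count x := by simp [piW]

@[simp]
theorem piW_nil : piW ([] : List α) = 0 := by simp [piW]

@[simp]
theorem piW_cons (a : α) (u : List α) : piW (a :: u) = single a 1 + piW u := by
  ext x; simp [piW_apply, List.count_cons, single_apply, add_comm]

@[simp]
theorem piW_append (u v : List α) : piW (u ++ v) = piW u + piW v := by
  ext x; simp [piW_apply]

@[simp]
theorem piW_replicate (n : ℕ) (a : α) : piW (List.replicate n a) = single a n := by
  ext x; simp [piW_apply, List.count_replicate, single_apply]

theorem piW_toList (f : α →₀ ℕ) : piW (toMultiset f).toList = f := by simp [piW]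

theorem List.IsInfix.piW_le {u v : List α} (h : u <:+: v) : piW u ≤ piW v :=
  le_def.2 fun x => by simpa only [piW_apply] using h.sublist.count_le x

theorem finite_piW_preimage_singleton (f : α →₀ ℕ) : (piW ⁻¹' {f}).Finite := by
  refine (toMultiset f).lists.finite_toSet.subset fun u (hu : piW u = f) => ?_
  change u ∈ (toMultiset f).lists
  rw [Multiset.mem_lists_iff, Multiset.quot_mk_to_coe, ← hu, piW,
    Multiset.toFinsupp_toMultiset]

theorem finite_setOf_piW_le (f : α →₀ ℕ) : {u : List α | piW u ≤ f}.Finite :=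
  (Set.finite_Iic f).preimage' fun g _ => finite_piW_preimage_singleton g

theorem exists_shorter_infix_le_piW {u : List α} {w : α →₀ ℕ} {z : α} (hwu : w ≤ piW u)
    (hwz : w z < piW u z) (hdeg : degree (erase z w) ≤ 1) :
    ∃ v, v <:+: u ∧ v.length < u.length ∧ w ≤ piW v := by
  obtain _ | ⟨a, v⟩ := u
  · simp at hwz
  by_cases ha : w a < piW (a :: v) a
  · refine ⟨v, (List.suffix_cons a v).isInfix, by simp, ?_⟩
    simpa using le_tsub_single_of_lt hwu ha
  have haz : a ≠ z := fun h => ha (h ▸ hwz)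
  obtain rfl | ⟨v, b, rfl⟩ := v.eq_nil_or_concat'
  · simp [haz.symm] at hwz
  by_cases hb : w b < piW (a :: (v ++ [b])) b
  · refine ⟨a :: v, (List.prefix_append (a :: v) [b]).isInfix, by simp, ?_⟩
    have hpiW : piW (a :: (v ++ [b])) = piW (a :: v) + single b 1 := by simp [add_assoc]
    simpa [hpiW] using le_tsub_single_of_lt hwu hb
  have hbz : b ≠ z := fun h => hb (h ▸ hwz)
  -- Neither end letter can be dropped, so `w/z` contains both of them: `deg(w/z) ≥ 2`.
  have hab : single a 1 + single b 1 ≤ piW (a :: (v ++ [b])) := by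
    simp only [piW_cons, piW_append, piW_nil, add_zero, ← add_assoc]
    exact add_le_add le_self_add le_rfl
  have : single a 1 + single b 1 ≤ erase z w := by
    refine le_def.2 fun c => ?_
    by_cases hca : c = a
    · subst hca
      rw [erase_ne haz]
      exact (hab c).trans (not_lt.1 ha)
    by_cases hcb : c = b
    · subst hcb
      rw [erase_ne hbz]
      exact (hab c).trans (not_lt.1 hb)
    simp [Ne.symm hca, Ne.symm hcb]
  have := degree_mono this
  simp only [map_add, degree_single] at this
  omega

end Words

section Conditions

variable {α : Type*}

-- Condition (ii); `erase z w` is `w/z`.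
def ErasureCondition (M : Set (α →₀ ℕ)) : Prop :=
  ∀ m ∈ M, ∀ x y z : α, z ≠ x → z ≠ y → single x 1 + single y 1 ≤ m →
    ∃ w ∈ M, erase z w ≤ m - single x 1 ∨ erase z w ≤ m - single y 1

-- Condition (iii).
def PowerLetterCondition (M : Set (α →₀ ℕ)) : Prop :=
  ∀ m ∈ M, ∀ z : α, (∀ r : ℕ, 1 ≤ r → single z r ∉ M) → 2 ≤ degree (erase z m) →
    ∃ r : ℕ, 1 ≤ r ∧ ∃ t : α, t ≠ z ∧ t ∈ m.support ∧ single z r + single t 1 ∈ M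

-- The maximal exponent of `x` over `M₂`; it is `0` when `M₂` is empty (`sSup ∅ = 0` in `ℕ`).
noncomputable def expBound (M : Set (α →₀ ℕ)) (x : α) : ℕ :=
  sSup {n : ℕ | ∃ v ∈ M, #v.support ≤ 2 ∧ v x = n}

-- The generating set of condition (iv).
def boundedWords [DecidableEq α] (M : Set (α →₀ ℕ)) : Set (List α) :=
  {u | piW u ∈ monIdeal M ∧ ∀ x, piW u x ≤ expBound M x}

variable {M : Set (α →₀ ℕ)}

theorem sum_apply_mem_upperBounds (hfin : M.Finite) (x : α) :
    (∑ v ∈ hfin.toFinset, v) x ∈ upperBounds {n : ℕ | ∃ v ∈ M, #v.support ≤ 2 ∧ v x = n} := by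
  rintro _ ⟨v, hv, -, rfl⟩
  exact le_def.1 (Finset.single_le_sum (f := id) (fun _ _ => zero_le) (hfin.mem_toFinset.2 hv)) x

theorem le_expBound (hfin : M.Finite) {v : α →₀ ℕ} (hv : v ∈ M) (hcard : #v.support ≤ 2) (x : α) :
    v x ≤ expBound M x :=
  le_csSup ⟨_, sum_apply_mem_upperBounds hfin x⟩ ⟨v, hv, hcard, rfl⟩

theorem expBound_le_sum_apply (hfin : M.Finite) (x : α) :
    expBound M x ≤ (∑ v ∈ hfin.toFinset, v) x :=
  csSup_le' (sum_apply_mem_upperBounds hfin x)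

end Conditions

theorem erasureCondition_of_fgIdeal {α : Type*} [DecidableEq α] {M : Set (α →₀ ℕ)}
    (h : FGIdeal (piW ⁻¹' monIdeal M)) : ErasureCondition M := by
  obtain ⟨T, hT, hTJ⟩ := h
  intro m hm x y z _ _ hxy
  obtain ⟨n, hn⟩ := (hT.image List.length).bddAbove
  set rest := m - (single x 1 + single y 1)
  have hm_eq : single x 1 + single y 1 + rest = m := add_tsub_cancel_of_le hxy
  set tail := List.replicate n z ++ y :: (toMultiset rest).toList
  have hu : x :: tail ∈ wordIdeal T := by
    rw [hTJ]
    refine ⟨m, hm, ?_⟩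
    have : piW (x :: tail) = m + single z n := by
      simp only [tail, piW_cons, piW_append, piW_replicate, piW_toList, ← hm_eq]
      abel
    exact this ▸ le_self_add
  obtain ⟨t, ht, htu⟩ := hu
  obtain ⟨w, hw, hwt⟩ : piW t ∈ monIdeal M := by
    rw [← Set.mem_preimage, ← hTJ]
    exact ⟨t, ht, List.infix_refl t⟩
  refine ⟨w, hw, ?_⟩
  rcases List.infix_cons_iff.1 htu with hpre | hinf
  · right
    have hshort : t <+: x :: List.replicate n z :=
      List.prefix_of_prefix_length_le hpre (List.prefix_append _ _)
        (by simpa using (hn (Set.mem_image_of_mem _ ht)).trans (Nat.le_succ n))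
    have : w ≤ single x 1 + single z n := by simpa using hwt.trans hshort.isInfix.piW_le
    exact (erase_le_of_le_add_single this).trans (le_tsub_of_add_le_right hxy)
  · left
    have : w ≤ single y 1 + rest + single z n := by
      have := hwt.trans hinf.piW_le
      simp only [tail, piW_cons, piW_append, piW_replicate, piW_toList] at this
      rwa [add_comm (single z n)] at this
    rw [← hm_eq, add_assoc, add_tsub_cancel_left]
    exact erase_le_of_le_add_single this

theorem powerLetterCondition_of_erasureCondition {α : Type*} {M : Set (α →₀ ℕ)}
    (hM : IsMonAntichain M) (h : ErasureCondition M) : PowerLetterCondition M := by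
  intro m hm z hz hdeg
  induction hn : degree (erase z m) using Nat.strong_induction_on generalizing m with
  | _ n ih =>
  suffices key : ∀ x, single x 1 ≤ erase z m → ∀ w ∈ M, erase z w ≤ m - single x 1 →
      ∃ r, 1 ≤ r ∧ ∃ t, t ≠ z ∧ t ∈ m.support ∧ single z r + single t 1 ∈ M by
    obtain ⟨x, y, hxy⟩ := exists_single_add_single_le_of_two_le_degree hdeg
    have hx : single x 1 ≤ erase z m := le_of_add_le_left hxy
    have hy : single y 1 ≤ erase z m := le_of_add_le_right hxy
    have hne : ∀ c, single c 1 ≤ erase z m → z ≠ c := by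
      rintro c hc rfl
      simpa using hc z
    obtain ⟨w, hw, hwx | hwy⟩ :=
      h m hm x y z (hne x hx) (hne y hy) (hxy.trans (erase_le_self z m))
    · exact key x hx w hw hwx
    · exact key y hy w hw hwy
  intro x hx w hw hwm
  have hwm' : erase z w ≤ m := hwm.trans tsub_le_self
  have hsupp : ∀ t, t ≠ z → t ∈ w.support → t ∈ m.support := fun t htz ht => by
    have := erase_le_iff.1 hwm' t htz
    simp only [mem_support_iff] at ht ⊢
    omega
  by_cases hdw : 2 ≤ degree (erase z w)
  · have hlt : degree (erase z w) < n := by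
      have hle : erase z w + single x 1 ≤ erase z m := by
        refine (le_tsub_iff_right hx).1 (erase_le_iff.2 fun c hc => ?_)
        simpa [erase_ne hc] using erase_le_iff.1 hwm c hc
      have := degree_mono hle
      rw [map_add, degree_single] at this
      omega
    obtain ⟨r, hr, t, htz, ht, hmem⟩ := ih _ hlt w hw hdw rfl
    exact ⟨r, hr, t, htz, hsupp t htz ht, hmem⟩
  have hwz : w z ≠ 0 := by
    intro hwz
    have hw_eq : erase z w = w := erase_of_notMem_support (notMem_support_iff.2 hwz)
    have := hM w hw m hm (hw_eq ▸ hwm')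
    subst this
    omega
  rcases Nat.le_one_iff_eq_zero_or_eq_one.1 (not_le.1 hdw |> Nat.lt_succ_iff.1) with h0 | h1
  · exact absurd (eq_single_of_degree_erase_eq_zero h0 ▸ hw) (hz _ (Nat.one_le_iff_ne_zero.2 hwz))
  · obtain ⟨t, htz, hw_eq⟩ := exists_eq_single_add_single_of_degree_erase_eq_one h1
    refine ⟨w z, Nat.one_le_iff_ne_zero.2 hwz, t, htz, hsupp t htz ?_, hw_eq ▸ hw⟩
    rw [hw_eq]
    simp [htz.symm]

theorem exists_mem_erase_le_of_powerLetterCondition {α : Type*} {M : Set (α →₀ ℕ)}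
    (h : PowerLetterCondition M) {m : α →₀ ℕ} (hm : m ∈ M) (z : α) :
    ∃ w ∈ M, erase z w ≤ erase z m ∧ degree (erase z w) ≤ 1 := by
  by_cases hpow : ∃ r, single z r ∈ M
  · obtain ⟨r, hr⟩ := hpow
    exact ⟨_, hr, by simp, by simp⟩
  by_cases hdeg : 2 ≤ degree (erase z m)
  · obtain ⟨r, -, t, htz, htm, hmem⟩ := h m hm z (fun r _ hr => hpow ⟨r, hr⟩) hdeg
    refine ⟨_, hmem, ?_, ?_⟩ <;> rw [erase_add, erase_single, erase_single_ne htz.symm, zero_add]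
    · refine le_def.2 fun c => ?_
      by_cases hct : c = t
      · subst hct
        simpa [erase_ne htz, Nat.one_le_iff_ne_zero] using htm
      · simp [Ne.symm hct]
    · simp
  · exact ⟨m, hm, le_rfl, by omega⟩

section BoundedWords

variable {α : Type*} [DecidableEq α] {M : Set (α →₀ ℕ)}

theorem le_expBound_of_minimal (hfin : M.Finite) (h : PowerLetterCondition M) {u : List α}
    (hu : piW u ∈ monIdeal M)
    (hmin : ∀ v, v <:+: u → v.length < u.length → piW v ∉ monIdeal M) (z : α) :
    piW u z ≤ expBound M z := by
  by_contra! hz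
  obtain ⟨m, hm, hmu⟩ := hu
  obtain ⟨w, hw, hwm, hdeg⟩ := exists_mem_erase_le_of_powerLetterCondition h hm z
  have hwz : w z < piW u z :=
    (le_expBound hfin hw (card_support_le_two_of_degree_erase_le_one hdeg) z).trans_lt hz
  have hwu : w ≤ piW u := le_of_erase_le (hwm.trans ((erase_le_self z m).trans hmu)) hwz.le
  obtain ⟨v, hvu, hlen, hwv⟩ := exists_shorter_infix_le_piW hwu hwz hdeg
  exact hmin v hvu hlen ⟨w, hw, hwv⟩

theorem wordIdeal_boundedWords_eq (hfin : M.Finite) (h : PowerLetterCondition M) :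
    wordIdeal (boundedWords M) = piW ⁻¹' monIdeal M := by
  ext u
  constructor
  · rintro ⟨s, ⟨⟨m, hm, hms⟩, -⟩, hsu⟩
    exact ⟨m, hm, hms.trans hsu.piW_le⟩
  · intro hu
    obtain ⟨s, hsu, hs, hmin⟩ := List.exists_infix_minimal (p := (· ∈ piW ⁻¹' monIdeal M)) hu
    exact ⟨s, ⟨hs, le_expBound_of_minimal hfin h hs hmin⟩, hsu⟩

theorem finite_boundedWords (hfin : M.Finite) : (boundedWords M).Finite :=
  (finite_setOf_piW_le (∑ v ∈ hfin.toFinset, v)).subset fun _ hu =>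
    le_def.2 fun x => (hu.2 x).trans (expBound_le_sum_apply hfin x)

end BoundedWords

/-- For a finite antichain `M` of monomials, the following are equivalent:
(i) `π⁻¹(⟨M⟩)` is a finitely generated ideal of the free monoid;
(ii) for every `m ∈ M` and letters `x`, `y`, `z` with `z ≠ x`, `z ≠ y` (possibly `x = y`)
such that `xy` divides `m`, some `w ∈ M` satisfies `w/z ∣ m·x⁻¹` or `w/z ∣ m·y⁻¹`;
(iii) for every `m ∈ M` and letter `z` no power of which lies in `M`, if `m/z` has total
degree at least `2`, then `z^r·t ∈ M` for some `r ≥ 1` and letter `t ≠ z` in the support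
of `m`;
(iv) `π⁻¹(⟨M⟩)` is generated by the words `u` with `π(u) ∈ ⟨M⟩` and every exponent of
`π(u)` bounded by the corresponding maximal exponent over `M₂`. -/
theorem stmt16 (M : Set (X →₀ ℕ)) (hfin : M.Finite) (hM : IsMonAntichain M) :
    (FGIdeal (piW ⁻¹' monIdeal M) ↔
      (∀ m ∈ M, ∀ x y z : X, z ≠ x → z ≠ y →
        Finsupp.single x 1 + Finsupp.single y 1 ≤ m →
        ∃ w ∈ M, Finsupp.erase z w ≤ m - Finsupp.single x 1 ∨
          Finsupp.erase z w ≤ m - Finsupp.single y 1)) ∧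
    ((∀ m ∈ M, ∀ x y z : X, z ≠ x → z ≠ y →
        Finsupp.single x 1 + Finsupp.single y 1 ≤ m →
        ∃ w ∈ M, Finsupp.erase z w ≤ m - Finsupp.single x 1 ∨
          Finsupp.erase z w ≤ m - Finsupp.single y 1) ↔
      (∀ m ∈ M, ∀ z : X, (∀ r : ℕ, 1 ≤ r → Finsupp.single z r ∉ M) →
        2 ≤ ((Finsupp.erase z m).sum fun _ e => e) →
        ∃ r : ℕ, 1 ≤ r ∧ ∃ t : X, t ≠ z ∧ t ∈ m.support ∧
          Finsupp.single z r + Finsupp.single t 1 ∈ M)) ∧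
    ((∀ m ∈ M, ∀ z : X, (∀ r : ℕ, 1 ≤ r → Finsupp.single z r ∉ M) →
        2 ≤ ((Finsupp.erase z m).sum fun _ e => e) →
        ∃ r : ℕ, 1 ≤ r ∧ ∃ t : X, t ≠ z ∧ t ∈ m.support ∧
          Finsupp.single z r + Finsupp.single t 1 ∈ M) ↔
      wordIdeal {u : List X | piW u ∈ monIdeal M ∧
          ∀ x : X, piW u x ≤ sSup {n : ℕ | ∃ v ∈ M, v.support.card ≤ 2 ∧ v x = n}} =
        piW ⁻¹' monIdeal M) := by
  have h12 : FGIdeal (piW ⁻¹' monIdeal M) → ErasureCondition M := erasureCondition_of_fgIdeal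
  have h23 : ErasureCondition M → PowerLetterCondition M :=
    powerLetterCondition_of_erasureCondition hM
  have h34 : PowerLetterCondition M → wordIdeal (boundedWords M) = piW ⁻¹' monIdeal M :=
    wordIdeal_boundedWords_eq hfin
  have h41 : wordIdeal (boundedWords M) = piW ⁻¹' monIdeal M → FGIdeal (piW ⁻¹' monIdeal M) :=
    fun h => ⟨_, finite_boundedWords hfin, h⟩
  exact ⟨⟨h12, fun h => h41 (h34 (h23 h))⟩, ⟨h23, fun h => h12 (h41 (h34 h))⟩,
    ⟨h34, fun h => h23 (h12 (h41 h))⟩⟩
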